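/- Let P be a crisp extended LP and let (L^i, U^i) for i ∈ ℕ be the stable-approximator iteration starting from (⊥,⊤). For every i ∈ ℕ, setting σ^i := ζ(L^i) and δ^i := Lit(Π) ∖ ζ(U^i), one has Lit(Π) ∖ ζ(lfp(X ↦ A_P(X,L^i)₁)) = gfp(DF^{σ^i,δ^i}). -/
import Mathlib


open Classical

/-- Literals over a type `A` of atoms: atoms `p` and strongly negated atoms `¬p`. -/
inductive Lit (A : Type*) where
  | pos : A → Lit A
  | neg : A → Lit A

/-- Crisp paraconsistent interpretations: each atom gets a pair of Boolean truth values
(truth, falsity); `true` plays the role of 1 and `false` of 0.  The order is the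
pointwise truth order `≤t`. -/
abbrev CInterp (A : Type*) := A → Bool × Bool

/-- Evaluation of a literal under a crisp paraconsistent interpretation. -/
def clit {A : Type*} (I : CInterp A) : Lit A → Bool
  | .pos p => (I p).1
  | .neg p => (I p).2

/-- A crisp rule body: a finite set of positive body literals and a finite
set of weakly negated body literals. -/
structure CBody (A : Type*) where
  pos : Finset (Lit A)
  wneg : Finset (Lit A)

/-- A crisp extended logic program: a set of rules `ℓ ← B`. -/
abbrev CProg (A : Type*) := Set (Lit A × CBody A)

/-- Pair evaluation of a crisp body: `1` iff all positive body literals are true in `I`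
and all weakly negated body literals are false in `J`. -/
noncomputable def cbody {A : Type*} (I J : CInterp A) (B : CBody A) : Bool :=
  if (∀ ℓ ∈ B.pos, clit I ℓ = true) ∧ (∀ ℓ ∈ B.wneg, clit J ℓ = false) then true else false

/-- The (lower half of the) crisp approximator `A_P(·,·)₁`: the head of an atom `p`
gets the max (over rules) of the pair-evaluations of the corresponding bodies
(max over the empty set being 0, i.e. `false`). -/
noncomputable def cA1 {A : Type*} (P : CProg A) (L U : CInterp A) : CInterp A :=
  fun p => (if ∃ B, (Lit.pos p, B) ∈ P ∧ cbody L U B = true then true else false,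
            if ∃ B, (Lit.neg p, B) ∈ P ∧ cbody L U B = true then true else false)

/-- The crisp approximator `A_P` on pairs. -/
noncomputable def cA {A : Type*} (P : CProg A) (LU : CInterp A × CInterp A) :
    CInterp A × CInterp A :=
  (cA1 P LU.1 LU.2, cA1 P LU.2 LU.1)

/-- The order isomorphism `ζ` from crisp paraconsistent interpretations to sets of literals. -/
def zeta {A : Type*} (I : CInterp A) : Set (Lit A) :=
  (Lit.pos '' {p | (I p).1 = true}) ∪ (Lit.neg '' {p | (I p).2 = true})

/-- Least pre-fixpoint (Knaster–Tarski least fixpoint for monotone maps). -/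
def lfpOf {α : Type*} [CompleteLattice α] (f : α → α) : α := sInf {x | f x ≤ x}

/-- Greatest post-fixpoint (Knaster–Tarski greatest fixpoint for monotone maps). -/
def gfpOf {α : Type*} [CompleteLattice α] (f : α → α) : α := sSup {x | x ≤ f x}

/-- The stable approximator `A_P^st`. -/
noncomputable def cAst {A : Type*} (P : CProg A) (LU : CInterp A × CInterp A) :
    CInterp A × CInterp A :=
  (lfpOf (fun X => cA1 P X LU.2), lfpOf (fun X => cA1 P X LU.1))

/-- The stable-approximator iteration `(L^i, U^i)` starting from `(⊥,⊤)`. -/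
noncomputable def iterLU {A : Type*} (P : CProg A) : ℕ → CInterp A × CInterp A
  | 0 => (⊥, ⊤)
  | i + 1 => cAst P (iterLU P i)

/-- Sakama's proven-facts operator `PF^{σ,δ}`. -/
def PF {A : Type*} (P : CProg A) (σ δ : Set (Lit A)) (α : Set (Lit A)) : Set (Lit A) :=
  {ℓ | ∃ B, (ℓ, B) ∈ P ∧ ↑B.pos ⊆ σ ∪ α ∧ ↑B.wneg ⊆ δ}

/-- Sakama's default-facts operator `DF^{σ,δ}`. -/
def DF {A : Type*} (P : CProg A) (σ δ : Set (Lit A)) (β : Set (Lit A)) : Set (Lit A) :=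
  {ℓ | ∀ B, (ℓ, B) ∈ P → (↑B.pos ∩ (β ∪ δ)).Nonempty ∨ (↑B.wneg ∩ σ).Nonempty}


section FixAux
variable {α : Type*} [CompleteLattice α]

lemma lfpOf_le {f : α → α} {x : α} (h : f x ≤ x) : lfpOf f ≤ x := sInf_le h

lemma le_gfpOf {f : α → α} {x : α} (h : x ≤ f x) : x ≤ gfpOf f := le_sSup h

lemma lfpOf_fixed {f : α → α} (hf : Monotone f) : f (lfpOf f) = lfpOf f := by
  have h1 : f (lfpOf f) ≤ lfpOf f := by
    apply le_sInf
    intro x hx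
    exact le_trans (hf (lfpOf_le hx)) hx
  exact le_antisymm h1 (lfpOf_le (hf h1))

lemma gfpOf_fixed {f : α → α} (hf : Monotone f) : f (gfpOf f) = gfpOf f := by
  have h1 : gfpOf f ≤ f (gfpOf f) := by
    apply sSup_le
    intro x hx
    exact le_trans hx (hf (le_gfpOf hx))
  exact le_antisymm (le_gfpOf (hf h1)) h1

lemma lfpOf_le_lfpOf {f g : α → α} (hg : Monotone g) (h : ∀ x, f x ≤ g x) :
    lfpOf f ≤ lfpOf g :=
  lfpOf_le (le_trans (h _) (le_of_eq (lfpOf_fixed hg)))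

lemma gfpOf_sup_eq {g : α → α} (hg : Monotone g) {δ : α} (hδ : δ ≤ gfpOf g) :
    gfpOf (fun x => g (x ⊔ δ)) = gfpOf g := by
  have hfix : g (gfpOf g) = gfpOf g := gfpOf_fixed hg
  have h1 : gfpOf g ≤ gfpOf (fun x => g (x ⊔ δ)) := by
    apply le_gfpOf
    calc gfpOf g = g (gfpOf g) := hfix.symm
    _ ≤ g (gfpOf g ⊔ δ) := hg le_sup_left
  have h2 : gfpOf (fun x => g (x ⊔ δ)) ≤ gfpOf g := by
    set γ := gfpOf (fun x => g (x ⊔ δ)) with hγ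
    have hpost : γ ≤ g (γ ⊔ δ) := by
      rw [hγ]
      exact le_of_eq (gfpOf_fixed (fun a b hab => hg (sup_le_sup_right hab δ))).symm
    have hδ2 : δ ≤ g (γ ⊔ δ) := by
      calc δ ≤ gfpOf g := hδ
      _ = g (gfpOf g) := hfix.symm
      _ ≤ g (γ ⊔ δ) := hg (le_trans h1 le_sup_left)
    exact le_trans le_sup_left (le_gfpOf (sup_le hpost hδ2) : γ ⊔ δ ≤ gfpOf g)
  exact le_antisymm h2 h1

end FixAux

section MainAux
variable {A : Type*}

lemma clit_mono {I J : CInterp A} (h : I ≤ J) {ℓ : Lit A} (hl : clit I ℓ = true) :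
    clit J ℓ = true := by
  cases ℓ with
  | pos p => exact Bool.le_iff_imp.mp (h p).1 hl
  | neg p => exact Bool.le_iff_imp.mp (h p).2 hl

lemma cbody_mono {I I' J J' : CInterp A} (hI : I ≤ I') (hJ : J' ≤ J) {B : CBody A}
    (hb : cbody I J B = true) : cbody I' J' B = true := by
  simp only [cbody] at hb ⊢
  by_cases hc : (∀ ℓ ∈ B.pos, clit I ℓ = true) ∧ (∀ ℓ ∈ B.wneg, clit J ℓ = false)
  · rw [if_pos]
    refine ⟨fun ℓ hℓ => clit_mono hI (hc.1 ℓ hℓ), fun ℓ hℓ => ?_⟩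
    by_contra hne
    have : clit J' ℓ = true := by
      cases hcl : clit J' ℓ
      · exact absurd hcl hne
      · rfl
    have := clit_mono hJ this
    rw [hc.2 ℓ hℓ] at this
    exact Bool.false_ne_true this
  · rw [if_neg hc] at hb
    exact absurd hb Bool.false_ne_true

private lemma ite_bool_le {c d : Prop} [Decidable c] [Decidable d] (h : c → d) :
    (if c then true else false) ≤ (if d then true else false) := by
  by_cases hc : c
  · simp [hc, h hc]
  · simp [hc]

lemma cA1_le_cA1 {P : CProg A} {X X' U U' : CInterp A} (hX : X ≤ X') (hU : U' ≤ U) :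
    cA1 P X U ≤ cA1 P X' U' := by
  intro p
  constructor <;>
  · apply ite_bool_le
    rintro ⟨B, hB, hb⟩
    exact ⟨B, hB, cbody_mono hX hU hb⟩

lemma cA1_mono (P : CProg A) (U : CInterp A) : Monotone (fun X => cA1 P X U) :=
  fun _ _ h => cA1_le_cA1 h le_rfl

lemma mem_zeta_iff {I : CInterp A} {ℓ : Lit A} : ℓ ∈ zeta I ↔ clit I ℓ = true := by
  cases ℓ <;> simp [zeta, clit]

lemma zeta_mono {I J : CInterp A} (h : I ≤ J) : zeta I ⊆ zeta J :=
  fun ℓ hℓ => mem_zeta_iff.mpr (clit_mono h (mem_zeta_iff.mp hℓ))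

lemma le_of_zeta_subset {I J : CInterp A} (h : zeta I ⊆ zeta J) : I ≤ J := by
  intro p
  constructor
  · exact Bool.le_iff_imp.mpr fun hp =>
      mem_zeta_iff.mp (h (mem_zeta_iff.mpr (show clit I (Lit.pos p) = true from hp)))
  · exact Bool.le_iff_imp.mpr fun hp =>
      mem_zeta_iff.mp (h (mem_zeta_iff.mpr (show clit I (Lit.neg p) = true from hp)))

lemma zeta_inj {I J : CInterp A} (h : zeta I = zeta J) : I = J :=
  le_antisymm (le_of_zeta_subset h.le) (le_of_zeta_subset h.ge)

noncomputable def zetaInv (S : Set (Lit A)) : CInterp A :=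
  fun p => (decide (Lit.pos p ∈ S), decide (Lit.neg p ∈ S))

lemma zeta_zetaInv (S : Set (Lit A)) : zeta (zetaInv S) = S := by
  ext ℓ
  cases ℓ <;> simp [mem_zeta_iff, zetaInv, clit]

lemma clit_cA1_iff {P : CProg A} {X L : CInterp A} {ℓ : Lit A} :
    clit (cA1 P X L) ℓ = true ↔ ∃ B, (ℓ, B) ∈ P ∧ cbody X L B = true := by
  cases ℓ <;> simp [cA1, clit]

lemma DF_mono (P : CProg A) (σ δ : Set (Lit A)) : Monotone (DF P σ δ) := by
  intro β β' h ℓ hℓ B hB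
  rcases hℓ B hB with ⟨x, hx1, hx2⟩ | hn
  · refine Or.inl ⟨x, hx1, ?_⟩
    rcases hx2 with h' | h'
    · exact Or.inl (h h')
    · exact Or.inr h'
  · exact Or.inr hn

lemma compl_zeta_cA1 (P : CProg A) (X L : CInterp A) :
    Set.univ \ zeta (cA1 P X L) = DF P (zeta L) ∅ (Set.univ \ zeta X) := by
  ext ℓ
  simp only [Set.mem_diff, Set.mem_univ, true_and, DF, Set.mem_setOf_eq, Set.union_empty,
    mem_zeta_iff, clit_cA1_iff, cbody]
  constructor
  · intro h B hB
    by_cases hpos : ∀ ℓ' ∈ B.pos, clit X ℓ' = true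
    · by_cases hwn : ∀ ℓ' ∈ B.wneg, clit L ℓ' = false
      · exact absurd ⟨B, hB, by rw [if_pos ⟨hpos, hwn⟩]⟩ h
      · push_neg at hwn
        obtain ⟨ℓ', hℓ', hne⟩ := hwn
        refine Or.inr ⟨ℓ', Finset.mem_coe.mpr hℓ', mem_zeta_iff.mpr ?_⟩
        cases hc : clit L ℓ'
        · exact absurd hc hne
        · rfl
    · push_neg at hpos
      obtain ⟨ℓ', hℓ', hne⟩ := hpos
      refine Or.inl ⟨ℓ', Finset.mem_coe.mpr hℓ', Set.mem_diff_of_mem trivial ?_⟩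
      rw [mem_zeta_iff]
      exact hne
  · rintro h ⟨B, hB, hb⟩
    rcases h B hB with ⟨x, hx1, _, hx2⟩ | ⟨x, hx1, hx2⟩
    · rw [mem_zeta_iff] at hx2
      have : clit X x = true := by
        by_cases hc : (∀ ℓ' ∈ B.pos, clit X ℓ' = true) ∧ (∀ ℓ' ∈ B.wneg, clit L ℓ' = false)
        · exact hc.1 x (Finset.mem_coe.mp hx1)
        · rw [if_neg hc] at hb; exact absurd hb Bool.false_ne_true
      exact hx2 this
    · rw [mem_zeta_iff] at hx2
      have : clit L x = false := by
        by_cases hc : (∀ ℓ' ∈ B.pos, clit X ℓ' = true) ∧ (∀ ℓ' ∈ B.wneg, clit L ℓ' = false)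
        · exact hc.2 x (Finset.mem_coe.mp hx1)
        · rw [if_neg hc] at hb; exact absurd hb Bool.false_ne_true
      rw [hx2] at this
      exact Bool.noConfusion this

lemma compl_zeta_lfp_aux (P : CProg A) (L : CInterp A) :
    Set.univ \ zeta (lfpOf (fun X => cA1 P X L)) = gfpOf (DF P (zeta L) ∅) := by
  set f : CInterp A → CInterp A := fun X => cA1 P X L with hf
  set g : Set (Lit A) → Set (Lit A) := DF P (zeta L) ∅ with hg
  have hfm : Monotone f := cA1_mono P L
  have hgm : Monotone g := DF_mono P (zeta L) ∅
  have hffix : f (lfpOf f) = lfpOf f := lfpOf_fixed hfm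
  have hggfix : g (gfpOf g) = gfpOf g := gfpOf_fixed hgm
  apply le_antisymm
  · apply le_gfpOf
    have := compl_zeta_cA1 P (lfpOf f) L
    rw [show cA1 P (lfpOf f) L = lfpOf f from hffix] at this
    exact this.le
  · set Y : CInterp A := zetaInv (Set.univ \ gfpOf g) with hY
    have hzY : zeta Y = Set.univ \ gfpOf g := zeta_zetaInv _
    have hsub : gfpOf g ⊆ Set.univ := Set.subset_univ _
    have hfY : f Y = Y := by
      apply zeta_inj
      have h1 : Set.univ \ zeta (f Y) = g (Set.univ \ zeta Y) := compl_zeta_cA1 P Y L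
      rw [hzY, Set.diff_diff_cancel_left hsub, hggfix] at h1
      have h2 : zeta (f Y) ⊆ Set.univ := Set.subset_univ _
      calc zeta (f Y) = Set.univ \ (Set.univ \ zeta (f Y)) :=
        (Set.diff_diff_cancel_left h2).symm
      _ = Set.univ \ gfpOf g := by rw [h1]
      _ = zeta Y := hzY.symm
    have hle : lfpOf f ≤ Y := lfpOf_le hfY.le
    have : zeta (lfpOf f) ⊆ zeta Y := zeta_mono hle
    rw [hzY] at this
    intro x hx
    simp only [Set.mem_diff, Set.mem_univ, true_and]
    intro hcon
    exact (this hcon).2 hx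

lemma iterLU_mono (P : CProg A) (i : ℕ) :
    (iterLU P i).1 ≤ (iterLU P (i + 1)).1 ∧ (iterLU P (i + 1)).2 ≤ (iterLU P i).2 := by
  induction i with
  | zero => exact ⟨bot_le, le_top⟩
  | succ i ih =>
    have hL : (iterLU P (i + 1)).1 = lfpOf (fun X => cA1 P X (iterLU P i).2) := rfl
    have hU : (iterLU P (i + 1)).2 = lfpOf (fun X => cA1 P X (iterLU P i).1) := rfl
    have hL2 : (iterLU P (i + 2)).1 = lfpOf (fun X => cA1 P X (iterLU P (i + 1)).2) := rfl
    have hU2 : (iterLU P (i + 2)).2 = lfpOf (fun X => cA1 P X (iterLU P (i + 1)).1) := rfl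
    constructor
    · rw [hL, hL2]
      exact lfpOf_le_lfpOf (cA1_mono P _) (fun X => cA1_le_cA1 le_rfl ih.2)
    · rw [hU, hU2]
      exact lfpOf_le_lfpOf (cA1_mono P _) (fun X => cA1_le_cA1 le_rfl ih.1)

end MainAux

/-- Along the stable-approximator iteration `(L^i, U^i)` starting from
`(⊥,⊤)`: for every `i`, with `σ^i := ζ(L^i)` and `δ^i := Lit(Π) ∖ ζ(U^i)`,
`Lit(Π) ∖ ζ(lfp(X ↦ A_P(X,L^i)₁)) = gfp(DF^{σ^i,δ^i})`. -/
theorem compl_zeta_lfp_eq_gfp_DF {A : Type*}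
    (P : CProg A) (hfin : P.Finite) (i : ℕ) :
    Set.univ \ zeta (lfpOf (fun X => cA1 P X (iterLU P i).1)) =
      gfpOf (DF P (zeta (iterLU P i).1) (Set.univ \ zeta (iterLU P i).2)) := by
  have hL : (iterLU P i).1 = (iterLU P i).1 := rfl
  set L := (iterLU P i).1 with hLdef
  set U := (iterLU P i).2 with hUdef
  have h1 : Set.univ \ zeta (lfpOf fun X => cA1 P X L) = gfpOf (DF P (zeta L) ∅) :=
    compl_zeta_lfp_aux P L
  have h2 : (iterLU P (i + 1)).2 = lfpOf fun X => cA1 P X L := rfl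
  have hUmono : (iterLU P (i + 1)).2 ≤ U := (iterLU_mono P i).2
  have hδ : Set.univ \ zeta U ≤ gfpOf (DF P (zeta L) ∅) := by
    rw [← h1, ← h2]
    intro x hx
    simp only [Set.mem_diff, Set.mem_univ, true_and] at hx ⊢
    exact fun hc => hx (zeta_mono hUmono hc)
  rw [h1, ← gfpOf_sup_eq (DF_mono P (zeta L) ∅) hδ]
  congr 1
  funext β
  ext ℓ
  simp only [DF, Set.mem_setOf_eq, Set.union_empty, Set.sup_eq_union]
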